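/- Let k ∈ ℝ, let 0 < r2 < r1 < 1/e with 0 < c2 ≤ r1 and c1 > 0, and assume (1/2)·r ≤ sn_k(r) ≤ 2r for all r ∈ (0, r1]. Define ψ(r) = ∫₀^r [ ζ(s/r2)/(s·(log(1/s))²) + (1 − ζ(s/r2))·s/r2 ] ds, h(r) = 1 − c1·η(r/r1)·ψ(r), f(r) = sn_k(r)·h(r), and u(r) = −c2·∫_r^∞ η(4s/r1)·ζ(s/(4r2)) / (s·log(1/s)) ds. Then ∫₀^{r1} e^{−u(r)}·f(r) dr ≤ 6·r1². -/

import Mathlib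

/-- The fixed pair of smooth cutoff functions used in the cutoff-function
construction. -/
def CutoffPair (ζ η : ℝ → ℝ) : Prop :=
  ContDiff ℝ (⊤ : ℕ∞) ζ ∧ ContDiff ℝ (⊤ : ℕ∞) η ∧
  (∀ x ∈ Set.Icc (0 : ℝ) (1 / 2), ζ x = 0) ∧ (∀ x ≥ (1 : ℝ), ζ x = 1) ∧
  (∀ x ≥ (0 : ℝ), 0 ≤ deriv ζ x ∧ deriv ζ x ≤ 4 ∧ |deriv (deriv ζ) x| ≤ 16) ∧
  (∀ x ∈ Set.Icc (0 : ℝ) (1 / 2), η x = 1) ∧ (∀ x ≥ (1 : ℝ), η x = 0) ∧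
  (∀ x ≥ (0 : ℝ), -4 ≤ deriv η x ∧ deriv η x ≤ 0 ∧ |deriv (deriv η) x| ≤ 16)

/-- `sn k` is the generalized sine function. -/
noncomputable def sn (k r : ℝ) : ℝ :=
  if 0 < k then Real.sin (Real.sqrt k * r) / Real.sqrt k
  else if k = 0 then r
  else Real.sinh (Real.sqrt (-k) * r) / Real.sqrt (-k)

/-- `ψ(r) = ∫₀^r [ζ(s/r2)/(s log²(1/s)) + (1-ζ(s/r2)) s/r2] ds`. -/
noncomputable def psiFun (ζ : ℝ → ℝ) (r2 r : ℝ) : ℝ :=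
  ∫ s in (0 : ℝ)..r,
    (ζ (s / r2) * (1 / (s * (Real.log (1 / s)) ^ 2)) + (1 - ζ (s / r2)) * (s / r2))

/-- `h(r) = 1 - c1 η(r/r1) ψ(r)`. -/
noncomputable def hFun (ζ η : ℝ → ℝ) (c1 r1 r2 r : ℝ) : ℝ :=
  1 - c1 * η (r / r1) * psiFun ζ r2 r

/-- `f(r) = sn_k(r) h(r)`. -/
noncomputable def fFun (ζ η : ℝ → ℝ) (k c1 r1 r2 r : ℝ) : ℝ :=
  sn k r * hFun ζ η c1 r1 r2 r

/-- `u(r) = -c2 ∫_r^∞ η(4s/r1) ζ(s/(4r2)) / (s log(1/s)) ds`. -/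
noncomputable def uFun (ζ η : ℝ → ℝ) (c2 r1 r2 r : ℝ) : ℝ :=
  -c2 * ∫ s in Set.Ioi r, η (4 * s / r1) * ζ (s / (4 * r2)) / (s * Real.log (1 / s))

open MeasureTheory Set in
private lemma my_monoOn {f : ℝ → ℝ} (hf : ContDiff ℝ (⊤ : ℕ∞) f)
    (hd : ∀ x ≥ (0:ℝ), 0 ≤ deriv f x) : MonotoneOn f (Set.Ici 0) := by
  apply monotoneOn_of_deriv_nonneg (convex_Ici 0) hf.continuous.continuousOn
    (fun x _ => ((hf.differentiable (by simp)) x).differentiableWithinAt)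
  intro x hx
  rw [interior_Ici] at hx
  exact hd x hx.le

open MeasureTheory Set in
private lemma my_antiOn {f : ℝ → ℝ} (hf : ContDiff ℝ (⊤ : ℕ∞) f)
    (hd : ∀ x ≥ (0:ℝ), deriv f x ≤ 0) : AntitoneOn f (Set.Ici 0) := by
  apply antitoneOn_of_deriv_nonpos (convex_Ici 0) hf.continuous.continuousOn
    (fun x _ => ((hf.differentiable (by simp)) x).differentiableWithinAt)
  intro x hx
  rw [interior_Ici] at hx
  exact hd x hx.le

set_option maxHeartbeats 1000000 in
open MeasureTheory Set in
/-- the volume estimate `∫₀^{r1} e^{-u} f dr ≤ 6 r1²`. -/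
theorem stmt_12 (ζ η : ℝ → ℝ) (hcut : CutoffPair ζ η)
    (k r1 r2 c1 c2 : ℝ) (hr20 : 0 < r2) (hr21 : r2 < r1)
    (hr1 : r1 < Real.exp (-1)) (hc20 : 0 < c2) (hc21 : c2 ≤ r1) (hc1 : 0 < c1)
    (hsn : ∀ r ∈ Set.Ioc (0 : ℝ) r1, (1 / 2) * r ≤ sn k r ∧ sn k r ≤ 2 * r) :
    (∫ r in (0 : ℝ)..r1,
        Real.exp (-(uFun ζ η c2 r1 r2 r)) * fFun ζ η k c1 r1 r2 r)
      ≤ 6 * r1 ^ 2 := by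
  obtain ⟨hζs, hηs, hζ0, hζ1, hζd, hη1, hη0, hηd⟩ := hcut
  have hr10 : 0 < r1 := hr20.trans hr21
  have hr11 : r1 < 1 := hr1.trans (Real.exp_lt_one_iff.2 (by norm_num))
  have hlog4 : 1 < Real.log 4 := by
    rw [Real.lt_log_iff_exp_lt (by norm_num)]
    have := Real.exp_one_lt_d9; linarith
  have hlog4' : 0 < Real.log 4 := by linarith
  -- bounds for the cutoffs
  have hζmono : MonotoneOn ζ (Set.Ici 0) := my_monoOn hζs (fun x hx => (hζd x hx).1)
  have hηanti : AntitoneOn η (Set.Ici 0) := my_antiOn hηs (fun x hx => (hηd x hx).2.1)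
  have hζmem : ∀ x : ℝ, 0 ≤ x → 0 ≤ ζ x ∧ ζ x ≤ 1 := by
    intro x hx
    constructor
    · have h0 : ζ 0 = 0 := hζ0 0 ⟨le_rfl, by norm_num⟩
      calc (0:ℝ) = ζ 0 := h0.symm
        _ ≤ ζ x := hζmono self_mem_Ici hx hx
    · rcases le_or_gt 1 x with h1 | h1
      · rw [hζ1 x h1]
      · calc ζ x ≤ ζ 1 := hζmono hx (by norm_num) h1.le
          _ = 1 := hζ1 1 le_rfl
  have hηmem : ∀ x : ℝ, 0 ≤ x → 0 ≤ η x ∧ η x ≤ 1 := by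
    intro x hx
    constructor
    · rcases le_or_gt 1 x with h1 | h1
      · rw [hη0 x h1]
      · calc (0:ℝ) = η 1 := (hη0 1 le_rfl).symm
          _ ≤ η x := hηanti hx (by norm_num) h1.le
    · have h0 : η 0 = 1 := hη1 0 ⟨le_rfl, by norm_num⟩
      calc η x ≤ η 0 := hηanti self_mem_Ici hx hx
        _ = 1 := h0
  -- the function under the u-integral, cut to positive reals
  set F : ℝ → ℝ :=
    (Set.Ioi (0:ℝ)).indicator
      (fun s => η (4 * s / r1) * ζ (s / (4 * r2)) / (s * Real.log (1 / s))) with hFdef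
  have hF_eq : ∀ s : ℝ, 0 < s →
      F s = η (4 * s / r1) * ζ (s / (4 * r2)) / (s * Real.log (1 / s)) := by
    intro s hs; simp only [hFdef]; exact Set.indicator_of_mem hs _
  have hFtop : ∀ s : ℝ, r1 / 4 ≤ s → F s = 0 := by
    intro s hs
    have hs0 : 0 < s := lt_of_lt_of_le (by positivity) hs
    rw [hF_eq s hs0, hη0 (4 * s / r1) (by rw [ge_iff_le, le_div_iff₀ hr10]; linarith), zero_mul, zero_div]
  have hF0 : ∀ s : ℝ, s ≤ 2 * r2 → F s = 0 := by
    intro s hs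
    rcases le_or_gt s 0 with h | h
    · simp only [hFdef]; exact Set.indicator_of_notMem (by simpa using h) _
    · rw [hF_eq s h, hζ0 (s / (4 * r2)) ⟨by positivity, by rw [div_le_iff₀ (by positivity)]; linarith⟩,
        mul_zero, zero_div]
  have hFnonneg : ∀ s : ℝ, 0 ≤ F s := by
    intro s
    rcases le_or_gt s 0 with h | h
    · rw [hFdef, Set.indicator_of_notMem (by simpa using h)]
    rcases le_or_gt (r1 / 4) s with h2 | h2
    · rw [hFtop s h2]
    · rw [hF_eq s h]
      have hlog : 0 ≤ Real.log (1 / s) := by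
        apply Real.log_nonneg
        rw [le_div_iff₀ h]; nlinarith
      have h1 := hηmem (4 * s / r1) (by positivity)
      have h2' := hζmem (s / (4 * r2)) (by positivity)
      exact div_nonneg (mul_nonneg h1.1 h2'.1) (mul_nonneg h.le hlog)
  have hFle : ∀ s : ℝ, 0 < s → s ≤ r1 / 4 → F s ≤ (Real.log 4)⁻¹ * s⁻¹ := by
    intro s hs hs4
    rw [hF_eq s hs]
    have h1 := hηmem (4 * s / r1) (by positivity)
    have h2 := hζmem (s / (4 * r2)) (by positivity)
    have hnum1 : η (4 * s / r1) * ζ (s / (4 * r2)) ≤ 1 := by nlinarith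
    have hnum0 : 0 ≤ η (4 * s / r1) * ζ (s / (4 * r2)) := mul_nonneg h1.1 h2.1
    have hlog : Real.log 4 ≤ Real.log (1 / s) := by
      apply Real.log_le_log (by norm_num)
      rw [le_div_iff₀ hs]; nlinarith
    have hden : s * Real.log 4 ≤ s * Real.log (1 / s) := by nlinarith
    calc η (4 * s / r1) * ζ (s / (4 * r2)) / (s * Real.log (1 / s))
        ≤ 1 / (s * Real.log 4) := div_le_div₀ (by norm_num) hnum1 (by positivity) hden
      _ = (Real.log 4)⁻¹ * s⁻¹ := by rw [one_div, mul_inv, mul_comm]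
  have hFmeas : Measurable F := by
    simp only [hFdef]
    apply Measurable.indicator _ measurableSet_Ioi
    have hl : Measurable Real.log := Real.measurable_log
    have hηc := hηs.continuous
    have hζc := hζs.continuous
    fun_prop
  have hFint : Integrable F := by
    set M : ℝ := (Real.log 4)⁻¹ * (2 * r2)⁻¹ with hMdef
    have hM0 : 0 ≤ M := by positivity
    apply Integrable.mono'
      (g := (Set.Ioc (2 * r2) (r1 / 4)).indicator fun _ => M)
      ((integrable_indicator_iff measurableSet_Ioc).2
        (integrableOn_const measure_Ioc_lt_top.ne))
      hFmeas.aestronglyMeasurable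
    apply Filter.Eventually.of_forall
    intro s
    rcases em (s ∈ Set.Ioc (2 * r2) (r1 / 4)) with hmem | hmem
    · rw [Set.indicator_of_mem hmem, Real.norm_eq_abs, abs_of_nonneg (hFnonneg s)]
      calc F s ≤ (Real.log 4)⁻¹ * s⁻¹ := hFle s (lt_trans (by positivity) hmem.1) hmem.2
        _ ≤ M := by
            simp only [hMdef]
            have : s⁻¹ ≤ (2 * r2)⁻¹ := by
              apply inv_anti₀ (by positivity) hmem.1.le
            nlinarith [inv_nonneg.2 hlog4'.le]
    · rw [Set.indicator_of_notMem hmem]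
      rw [Set.mem_Ioc, not_and_or] at hmem
      have hFz : F s = 0 := by
        rcases hmem with h | h
        · exact hF0 s (not_lt.1 h)
        · exact hFtop s (not_le.1 h).le
      simp [hFz]
  -- Φ and its properties
  set Φ : ℝ → ℝ := fun r => ∫ s in Set.Ioi r, F s with hΦdef
  have hΦanti : Antitone Φ := by
    intro a b hab
    exact setIntegral_mono_set hFint.integrableOn
      (ae_restrict_of_ae (Filter.Eventually.of_forall hFnonneg))
      ((Set.Ioi_subset_Ioi hab).eventuallyLE)
  have hΦmeas : Measurable Φ := hΦanti.measurable
  have hΦle : ∀ r : ℝ, 0 < r → r ≤ r1 →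
      Φ r ≤ (Real.log 4)⁻¹ * (Real.log r1 - Real.log r) := by
    intro r hr hrr1
    have hlogs : Real.log r ≤ Real.log r1 := Real.log_le_log hr hrr1
    rcases le_or_gt (r1 / 4) r with hbr | hrb
    · have hz : Φ r = 0 := by
        simp only [hΦdef]
        rw [setIntegral_congr_fun measurableSet_Ioi
          (fun s hs => hFtop s (hbr.trans (le_of_lt hs)))]
        simp
      rw [hz]
      have : 0 ≤ Real.log r1 - Real.log r := by linarith
      positivity
    · have hsplit : Φ r = (∫ s in Set.Ioc r (r1/4), F s) + ∫ s in Set.Ioi (r1/4), F s := by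
        simp only [hΦdef]
        rw [show Set.Ioi r = Set.Ioc r (r1/4) ∪ Set.Ioi (r1/4) from
          (Set.Ioc_union_Ioi_eq_Ioi hrb.le).symm]
        exact setIntegral_union (Set.Ioc_disjoint_Ioi le_rfl) measurableSet_Ioi
          hFint.integrableOn hFint.integrableOn
      have hz : ∫ s in Set.Ioi (r1/4), F s = 0 := by
        rw [setIntegral_congr_fun measurableSet_Ioi (fun s hs => hFtop s (le_of_lt hs))]
        simp
      have hIc : IntegrableOn (fun s : ℝ => (Real.log 4)⁻¹ * s⁻¹) (Set.Ioc r (r1/4)) := by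
        apply ContinuousOn.integrableOn_Icc (a := r) (b := r1/4) ?_ |>.mono_set
          Set.Ioc_subset_Icc_self
        exact continuousOn_const.mul
          (continuousOn_id.inv₀ (fun x hx => (lt_of_lt_of_le hr hx.1).ne'))
      have hmono : (∫ s in Set.Ioc r (r1/4), F s)
          ≤ ∫ s in Set.Ioc r (r1/4), (Real.log 4)⁻¹ * s⁻¹ :=
        setIntegral_mono_on hFint.integrableOn hIc measurableSet_Ioc
          (fun s hs => hFle s (hr.trans hs.1) hs.2)
      have hcomp : ∫ s in Set.Ioc r (r1/4), (Real.log 4)⁻¹ * s⁻¹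
          = (Real.log 4)⁻¹ * (Real.log (r1/4) - Real.log r) := by
        rw [← intervalIntegral.integral_of_le hrb.le,
          intervalIntegral.integral_const_mul,
          integral_inv (by
            rw [Set.uIcc_of_le hrb.le]
            intro h0
            exact absurd h0.1 (not_le.2 hr)),
          Real.log_div (by positivity) hr.ne']
      have hlast : Real.log (r1/4) ≤ Real.log r1 :=
        Real.log_le_log (by positivity) (by linarith)
      rw [hsplit, hz, add_zero]
      calc (∫ s in Set.Ioc r (r1/4), F s) ≤ _ := hmono
        _ = (Real.log 4)⁻¹ * (Real.log (r1/4) - Real.log r) := hcomp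
        _ ≤ (Real.log 4)⁻¹ * (Real.log r1 - Real.log r) := by
            apply mul_le_mul_of_nonneg_left (by linarith) (by positivity)
  -- ψ and its properties
  set w : ℝ → ℝ := fun s =>
    ζ (s / r2) * (1 / (s * (Real.log (1 / s)) ^ 2)) + (1 - ζ (s / r2)) * (s / r2) with hwdef
  have hw_meas : Measurable w := by
    simp only [hwdef]
    have hl : Measurable Real.log := Real.measurable_log
    have hζc := hζs.continuous
    fun_prop
  have hlogbig : ∀ s : ℝ, 0 < s → s ≤ r1 → 1 ≤ Real.log (1 / s) := by
    intro s hs hsr1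
    rw [Real.le_log_iff_exp_le (by positivity)]
    rw [le_div_iff₀ hs]
    have he : Real.exp 1 * Real.exp (-1) = 1 := by
      rw [← Real.exp_add]; norm_num
    nlinarith [Real.exp_pos (1:ℝ), hr1]
  have hw_nonneg : ∀ s : ℝ, 0 < s → 0 ≤ w s := by
    intro s hs
    simp only [hwdef]
    have h1 := hζmem (s / r2) (by positivity)
    have h2 : (0:ℝ) ≤ 1 / (s * (Real.log (1 / s)) ^ 2) := by positivity
    have h3 : (0:ℝ) ≤ s / r2 := by positivity
    nlinarith
  set B : ℝ := 2 / r2 + r1 / r2 with hBdef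
  have hB0 : 0 < B := by simp only [hBdef]; positivity
  have hw_le : ∀ s : ℝ, 0 < s → s ≤ r1 → w s ≤ B := by
    intro s hs hsr1
    simp only [hwdef, hBdef]
    have h1 := hζmem (s / r2) (by positivity)
    have hterm2 : (1 - ζ (s / r2)) * (s / r2) ≤ r1 / r2 := by
      have : s / r2 ≤ r1 / r2 := by gcongr
      nlinarith [div_nonneg hs.le hr20.le]
    have hterm1 : ζ (s / r2) * (1 / (s * (Real.log (1 / s)) ^ 2)) ≤ 2 / r2 := by
      rcases le_or_gt s (r2 / 2) with h | h
      · rw [hζ0 (s / r2) ⟨by positivity, by rw [div_le_iff₀ hr20]; linarith⟩, zero_mul]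
        positivity
      · have hL := hlogbig s hs hsr1
        have hL2 : (1:ℝ) ≤ (Real.log (1 / s)) ^ 2 := by nlinarith
        have hden : r2 / 2 ≤ s * (Real.log (1 / s)) ^ 2 := by
          have := mul_le_mul_of_nonneg_left hL2 hs.le
          nlinarith
        have : 1 / (s * (Real.log (1 / s)) ^ 2) ≤ 1 / (r2 / 2) := by
          apply one_div_le_one_div_of_le (by positivity) hden
        have h2 : (1:ℝ) / (r2 / 2) = 2 / r2 := by
          rw [one_div_div]
        have h3 := mul_le_mul h1.2 this (by positivity) (by norm_num : (0:ℝ) ≤ 1)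
        rw [h2] at h3
        linarith
    linarith
  have hw_int : IntegrableOn w (Set.Icc 0 r1) := by
    apply Integrable.mono' (g := fun _ => B)
      (integrableOn_const measure_Icc_lt_top.ne)
      (hw_meas.aestronglyMeasurable)
    rw [ae_restrict_iff' measurableSet_Icc]
    apply Filter.Eventually.of_forall
    intro s hs
    rcases eq_or_lt_of_le hs.1 with h0 | h0
    · have : w s = 0 := by simp only [hwdef, ← h0]; simp
      rw [this]; simpa using hB0.le
    · rw [Real.norm_eq_abs, abs_of_nonneg (hw_nonneg s h0)]
      exact hw_le s h0 hs.2
  have hψ_repr : ∀ r : ℝ, 0 ≤ r → psiFun ζ r2 r = ∫ s in Set.Ioc 0 r, w s := by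
    intro r hr
    simp only [psiFun]; rw [intervalIntegral.integral_of_le hr]
  have hψ_nonneg : ∀ r ∈ Set.Ioc (0:ℝ) r1, 0 ≤ psiFun ζ r2 r := by
    intro r hr
    rw [hψ_repr r hr.1.le]
    exact setIntegral_nonneg measurableSet_Ioc (fun s hs => hw_nonneg s hs.1)
  have hψ_le : ∀ r ∈ Set.Ioc (0:ℝ) r1, psiFun ζ r2 r ≤ B * r1 := by
    intro r hr
    rw [hψ_repr r hr.1.le]
    have hsub : Set.Ioc (0:ℝ) r ⊆ Set.Icc 0 r1 :=
      fun s hs => ⟨hs.1.le, hs.2.trans hr.2⟩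
    calc (∫ s in Set.Ioc 0 r, w s) ≤ ∫ _s in Set.Ioc (0:ℝ) r, B :=
          setIntegral_mono_on (hw_int.mono_set hsub)
            (integrableOn_const measure_Ioc_lt_top.ne) measurableSet_Ioc
            (fun s hs => hw_le s hs.1 (hs.2.trans hr.2))
      _ = r * B := by
          rw [setIntegral_const, measureReal_def, Real.volume_Ioc, smul_eq_mul, sub_zero,
            ENNReal.toReal_ofReal hr.1.le]
      _ ≤ B * r1 := by rw [mul_comm]; exact mul_le_mul_of_nonneg_left hr.2 hB0.le
  have hψ_cont : ContinuousOn (fun r => psiFun ζ r2 r) (Set.Icc 0 r1) := by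
    apply (intervalIntegral.continuousOn_primitive hw_int).congr
    intro r hr
    exact hψ_repr r hr.1
  -- exponent β
  set β : ℝ := c2 / Real.log 4 with hβdef
  have hβ0 : 0 < β := div_pos hc20 hlog4'
  have hβ1 : β < 1 := by simp only [hβdef]; rw [div_lt_one hlog4']; linarith
  -- u in terms of Φ
  have hu_eq : ∀ r : ℝ, 0 < r → uFun ζ η c2 r1 r2 r = -c2 * Φ r := by
    intro r hr
    simp only [uFun, hΦdef]
    congr 1
    apply setIntegral_congr_fun measurableSet_Ioi
    intro s hs
    exact (hF_eq s (hr.trans hs)).symm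
  -- exponential bound
  have hexp : ∀ r : ℝ, 0 < r → r ≤ r1 →
      Real.exp (c2 * Φ r) ≤ r1 ^ β * r ^ (-β) := by
    intro r hr hrr1
    have h1 : c2 * Φ r ≤ Real.log r1 * β + Real.log r * (-β) := by
      have h2 : c2 * Φ r ≤ c2 * ((Real.log 4)⁻¹ * (Real.log r1 - Real.log r)) :=
        mul_le_mul_of_nonneg_left (hΦle r hr hrr1) hc20.le
      have h3 : c2 * ((Real.log 4)⁻¹ * (Real.log r1 - Real.log r))
          = Real.log r1 * β + Real.log r * (-β) := by
        simp only [hβdef]; field_simp; ring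
      linarith
    calc Real.exp (c2 * Φ r) ≤ Real.exp (Real.log r1 * β + Real.log r * (-β)) :=
          Real.exp_le_exp.2 h1
      _ = r1 ^ β * r ^ (-β) := by
          rw [Real.exp_add, Real.rpow_def_of_pos hr10, Real.rpow_def_of_pos hr]
  have hrpow_split : ∀ r : ℝ, 0 < r → r ^ ((1:ℝ) - β) = r ^ (-β) * r := by
    intro r hr
    rw [show (1:ℝ) - β = -β + 1 by ring, Real.rpow_add hr, Real.rpow_one]
  -- pointwise bounds
  have key : ∀ r ∈ Set.Ioc (0:ℝ) r1,
      Real.exp (-(uFun ζ η c2 r1 r2 r)) * fFun ζ η k c1 r1 r2 r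
        ≤ 2 * r1 ^ β * r ^ ((1:ℝ) - β) := by
    intro r hr
    obtain ⟨hr0, hrr1⟩ := hr
    have hE : -(uFun ζ η c2 r1 r2 r) = c2 * Φ r := by rw [hu_eq r hr0]; ring
    rw [hE]
    obtain ⟨hsn1, hsn2⟩ := hsn r ⟨hr0, hrr1⟩
    have hsn0 : 0 ≤ sn k r := le_trans (by linarith) hsn1
    have hh1 : hFun ζ η c1 r1 r2 r ≤ 1 := by
      simp only [hFun]
      have h1 := hηmem (r / r1) (by positivity)
      have h2 := hψ_nonneg r ⟨hr0, hrr1⟩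
      have h3 := mul_nonneg (mul_nonneg hc1.le h1.1) h2
      linarith
    have hf_le : fFun ζ η k c1 r1 r2 r ≤ 2 * r := by
      rw [fFun]
      calc sn k r * hFun ζ η c1 r1 r2 r ≤ sn k r * 1 :=
            mul_le_mul_of_nonneg_left hh1 hsn0
        _ = sn k r := mul_one _
        _ ≤ 2 * r := hsn2
    calc Real.exp (c2 * Φ r) * fFun ζ η k c1 r1 r2 r
        ≤ Real.exp (c2 * Φ r) * (2 * r) :=
          mul_le_mul_of_nonneg_left hf_le (Real.exp_pos _).le
      _ ≤ (r1 ^ β * r ^ (-β)) * (2 * r) := by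
          apply mul_le_mul_of_nonneg_right (hexp r hr0 hrr1) (by linarith)
      _ = 2 * r1 ^ β * r ^ ((1:ℝ) - β) := by rw [hrpow_split r hr0]; ring
  set P : ℝ := 1 + c1 * (B * r1) with hPdef
  have hP1 : 1 ≤ P := by
    simp only [hPdef]
    nlinarith [mul_nonneg hc1.le (mul_nonneg hB0.le hr10.le)]
  have keynorm : ∀ r ∈ Set.Ioc (0:ℝ) r1,
      ‖Real.exp (-(uFun ζ η c2 r1 r2 r)) * fFun ζ η k c1 r1 r2 r‖
        ≤ 2 * P * r1 ^ β * r ^ ((1:ℝ) - β) := by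
    intro r hr
    obtain ⟨hr0, hrr1⟩ := hr
    have hE : -(uFun ζ η c2 r1 r2 r) = c2 * Φ r := by rw [hu_eq r hr0]; ring
    rw [hE]
    obtain ⟨hsn1, hsn2⟩ := hsn r ⟨hr0, hrr1⟩
    have hsn0 : 0 ≤ sn k r := le_trans (by linarith) hsn1
    have hhabs : |hFun ζ η c1 r1 r2 r| ≤ P := by
      simp only [hFun, hPdef]
      have h1 := hηmem (r / r1) (by positivity)
      have h2 := hψ_nonneg r ⟨hr0, hrr1⟩
      have h3 := hψ_le r ⟨hr0, hrr1⟩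
      have ht : 0 ≤ c1 * η (r / r1) * psiFun ζ r2 r := mul_nonneg (mul_nonneg hc1.le h1.1) h2
      have ht2 : c1 * η (r / r1) * psiFun ζ r2 r ≤ c1 * (B * r1) := by
        have ha : η (r / r1) * psiFun ζ r2 r ≤ B * r1 := by
          have hb := mul_le_mul h1.2 h3 h2 (by norm_num : (0:ℝ) ≤ 1)
          linarith
        rw [mul_assoc]
        exact mul_le_mul_of_nonneg_left ha hc1.le
      rw [abs_le]
      constructor <;> linarith
    have hfabs : |fFun ζ η k c1 r1 r2 r| ≤ 2 * r * P := by
      simp only [fFun]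
      rw [abs_mul, abs_of_nonneg hsn0]
      have := mul_le_mul hsn2 hhabs (abs_nonneg _) (by linarith : (0:ℝ) ≤ 2 * r)
      linarith
    rw [Real.norm_eq_abs, abs_mul, Real.abs_exp]
    calc Real.exp (c2 * Φ r) * |fFun ζ η k c1 r1 r2 r|
        ≤ Real.exp (c2 * Φ r) * (2 * r * P) :=
          mul_le_mul_of_nonneg_left hfabs (Real.exp_pos _).le
      _ ≤ (r1 ^ β * r ^ (-β)) * (2 * r * P) := by
          apply mul_le_mul_of_nonneg_right (hexp r hr0 hrr1)
          nlinarith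
      _ = 2 * P * r1 ^ β * r ^ ((1:ℝ) - β) := by rw [hrpow_split r hr0]; ring
  -- integrability
  have hrpow_int : IntegrableOn (fun r : ℝ => r ^ ((1:ℝ) - β)) (Set.Ioc 0 r1) :=
    (intervalIntegrable_iff_integrableOn_Ioc_of_le hr10.le).1
      (intervalIntegral.intervalIntegrable_rpow' (by linarith))
  have hG_int : IntegrableOn (fun r : ℝ => 2 * r1 ^ β * r ^ ((1:ℝ) - β)) (Set.Ioc 0 r1) :=
    hrpow_int.const_mul _
  have hD_int : IntegrableOn (fun r : ℝ => 2 * P * r1 ^ β * r ^ ((1:ℝ) - β)) (Set.Ioc 0 r1) :=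
    hrpow_int.const_mul _
  have hsn_cont : Continuous (sn k) := by
    rcases lt_trichotomy 0 k with hk | hk | hk
    · have : sn k = fun r => Real.sin (Real.sqrt k * r) / Real.sqrt k := by
        funext r; rw [sn, if_pos hk]
      rw [this]; fun_prop
    · have : sn k = fun r => r := by
        funext r; rw [sn, if_neg (by linarith), if_pos hk.symm]
      rw [this]; fun_prop
    · have : sn k = fun r => Real.sinh (Real.sqrt (-k) * r) / Real.sqrt (-k) := by
        funext r; rw [sn, if_neg (by linarith), if_neg (by linarith)]
      rw [this]; fun_prop
  have hg_meas : AEStronglyMeasurable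
      (fun r => Real.exp (-(uFun ζ η c2 r1 r2 r)) * fFun ζ η k c1 r1 r2 r)
      (volume.restrict (Set.Ioc 0 r1)) := by
    apply AEStronglyMeasurable.mul
    · have h1 : Measurable fun r => Real.exp (c2 * Φ r) :=
        Real.measurable_exp.comp (hΦmeas.const_mul c2)
      apply h1.aestronglyMeasurable.congr
      rw [Filter.EventuallyEq, ae_restrict_iff' measurableSet_Ioc]
      apply Filter.Eventually.of_forall
      intro r hr
      rw [hu_eq r hr.1]; ring_nf
    · have hψm : AEStronglyMeasurable (fun r => psiFun ζ r2 r)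
          (volume.restrict (Set.Ioc 0 r1)) :=
        ((hψ_cont.mono Set.Ioc_subset_Icc_self).aestronglyMeasurable measurableSet_Ioc)
      have hsm : AEStronglyMeasurable (sn k) (volume.restrict (Set.Ioc 0 r1)) :=
        hsn_cont.aestronglyMeasurable
      have hηm : AEStronglyMeasurable (fun r => c1 * η (r / r1))
          (volume.restrict (Set.Ioc 0 r1)) :=
        (continuous_const.mul ((hηs.continuous).comp (continuous_id.div_const r1))).aestronglyMeasurable
      have : AEStronglyMeasurable (fun r => hFun ζ η c1 r1 r2 r)
          (volume.restrict (Set.Ioc 0 r1)) := by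
        simp only [hFun]
        exact aestronglyMeasurable_const.sub (hηm.mul hψm)
      exact hsm.mul this
  have hg_int : IntegrableOn
      (fun r => Real.exp (-(uFun ζ η c2 r1 r2 r)) * fFun ζ η k c1 r1 r2 r)
      (Set.Ioc 0 r1) := by
    apply Integrable.mono' hD_int hg_meas
    rw [ae_restrict_iff' measurableSet_Ioc]
    exact Filter.Eventually.of_forall keynorm
  -- final computation
  rw [intervalIntegral.integral_of_le hr10.le]
  have step1 : (∫ r in Set.Ioc (0:ℝ) r1,
        Real.exp (-(uFun ζ η c2 r1 r2 r)) * fFun ζ η k c1 r1 r2 r)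
      ≤ ∫ r in Set.Ioc (0:ℝ) r1, 2 * r1 ^ β * r ^ ((1:ℝ) - β) :=
    setIntegral_mono_on hg_int hG_int measurableSet_Ioc key
  have step2 : (∫ r in Set.Ioc (0:ℝ) r1, 2 * r1 ^ β * r ^ ((1:ℝ) - β))
      = 2 * r1 ^ β * (r1 ^ ((2:ℝ) - β) / (2 - β)) := by
    rw [← intervalIntegral.integral_of_le hr10.le,
      intervalIntegral.integral_const_mul,
      integral_rpow (Or.inl (by linarith)),
      show (1:ℝ) - β + 1 = 2 - β by ring,
      Real.zero_rpow (by linarith), sub_zero]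
  have hpow2 : r1 ^ β * r1 ^ ((2:ℝ) - β) = r1 ^ 2 := by
    rw [← Real.rpow_add hr10, show β + ((2:ℝ) - β) = ((2:ℕ):ℝ) by push_cast; ring,
      Real.rpow_natCast]
  have step3 : 2 * r1 ^ β * (r1 ^ ((2:ℝ) - β) / (2 - β)) ≤ 6 * r1 ^ 2 := by
    have h2β : (1:ℝ) ≤ 2 - β := by linarith
    have h2β0 : (0:ℝ) < 2 - β := by linarith
    have heq : 2 * r1 ^ β * (r1 ^ ((2:ℝ) - β) / (2 - β))
        = 2 * r1 ^ 2 / (2 - β) := by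
      rw [← hpow2]; ring
    rw [heq, div_le_iff₀ h2β0]
    nlinarith [sq_nonneg r1]
  linarith
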